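/- Let k be a field, V a finite-dimensional k-vector space, and θ ∈ End_k(V). Then V has no θ-invariant subspace W with 0 ≠ W ≠ V if and only if End_k(V) has no right ideal I with 0 ≠ I ≠ End_k(V) satisfying (ad θ)(I) ⊆ I, where ad θ : End_k(V) → End_k(V) is the map f ↦ θ∘f − f∘θ. -/

import Mathlib

def rangeIdeal {k V : Type*} [Field k] [AddCommGroup V] [Module k V]
    (W : Submodule k V) : AddSubgroup (Module.End k V) where
  carrier := {f | LinearMap.range f ≤ W}
  add_mem' := by
    intro f g hf hg
    rintro x ⟨y, rfl⟩
    rw [LinearMap.add_apply]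
    exact W.add_mem (hf (LinearMap.mem_range_self f y)) (hg (LinearMap.mem_range_self g y))
  zero_mem' := by
    rintro x ⟨y, rfl⟩
    simp
  neg_mem' := by
    intro f hf
    rintro x ⟨y, rfl⟩
    rw [LinearMap.neg_apply]
    exact W.neg_mem (hf (LinearMap.mem_range_self f y))

def IsRightIdeal {k V : Type*} [Field k] [AddCommGroup V] [Module k V]
    (I : AddSubgroup (Module.End k V)) : Prop :=
  ∀ f ∈ I, ∀ g : Module.End k V, f * g ∈ I

/-!
A subspace `W` corresponds to the right ideal `rangeIdeal W` of endomorphisms with range in `W`,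
and a right ideal `I` to the span `rangeSup I` of the ranges of its elements. In finite dimension
these are mutually inverse: an endomorphism `f` with range in `rangeSup I` is the sum of the
rank-one maps `v ↦ b*ᵢ(v) • f(bᵢ)`, each of which lies in `I`. Under this correspondence
`θ`-invariance of `W` matches `ad θ`-invariance of `I`, since `θ f = (θ f - f θ) + f θ`.
-/

open LinearMap

section

variable {k V : Type*} [Field k] [AddCommGroup V] [Module k V]

def rangeSup (I : AddSubgroup (Module.End k V)) : Submodule k V :=
  ⨆ f : I, range (f : Module.End k V)

theorem range_le_rangeSup {I : AddSubgroup (Module.End k V)} {f : Module.End k V} (hf : f ∈ I) :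
    range f ≤ rangeSup I :=
  le_iSup (fun g : I => range (g : Module.End k V)) ⟨f, hf⟩

theorem mem_rangeIdeal {W : Submodule k V} {f : Module.End k V} :
    f ∈ rangeIdeal W ↔ range f ≤ W :=
  Iff.rfl

theorem rangeIdeal_isRightIdeal (W : Submodule k V) : IsRightIdeal (rangeIdeal W) := by
  intro f hf g
  exact (range_comp_le_range g f).trans hf

theorem rangeIdeal_adInvariant {θ : Module.End k V} {W : Submodule k V}
    (hW : ∀ x ∈ W, θ x ∈ W) (f : Module.End k V) (hf : f ∈ rangeIdeal W) :
    θ * f - f * θ ∈ rangeIdeal W := by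
  rintro _ ⟨v, rfl⟩
  exact W.sub_mem (hW _ (hf ⟨v, rfl⟩)) (hf ⟨θ v, rfl⟩)

theorem rangeSup_rangeIdeal (W : Submodule k V) : rangeSup (rangeIdeal W) = W := by
  refine le_antisymm (iSup_le fun f => f.2) ?_
  obtain ⟨W', hW'⟩ := W.exists_isCompl
  have hproj : W.projection W' hW' ∈ rangeIdeal W := (W.range_projection hW').le
  simpa using range_le_rangeSup hproj

theorem rangeIdeal_injective : Function.Injective (rangeIdeal : Submodule k V → _) :=
  Function.LeftInverse.injective rangeSup_rangeIdeal

theorem rangeIdeal_eq_bot_iff {W : Submodule k V} : rangeIdeal W = ⊥ ↔ W = ⊥ := by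
  have hbot : rangeIdeal (⊥ : Submodule k V) = ⊥ := by
    ext f
    simp [mem_rangeIdeal, range_eq_bot]
  rw [← hbot, rangeIdeal_injective.eq_iff]

theorem rangeIdeal_eq_top_iff {W : Submodule k V} : rangeIdeal W = ⊤ ↔ W = ⊤ := by
  have htop : rangeIdeal (⊤ : Submodule k V) = ⊤ := by
    ext f
    simp [mem_rangeIdeal]
  rw [← htop, rangeIdeal_injective.eq_iff]

theorem IsRightIdeal.smulRight_mem {I : AddSubgroup (Module.End k V)} (hI : IsRightIdeal I)
    (φ : Module.Dual k V) {w : V} (hw : w ∈ rangeSup I) : φ.smulRight w ∈ I := by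
  refine Submodule.iSup_induction _ (motive := fun w => φ.smulRight w ∈ I) hw ?_ ?_ ?_
  · rintro f _ ⟨v, rfl⟩
    have : φ.smulRight ((f : Module.End k V) v) = f * φ.smulRight v := by ext; simp
    exact this ▸ hI f f.2 _
  · simp
  · intro a b ha hb
    have : φ.smulRight (a + b) = φ.smulRight a + φ.smulRight b := by ext; simp [smul_add]
    exact this ▸ I.add_mem ha hb

theorem rangeIdeal_rangeSup [FiniteDimensional k V] {I : AddSubgroup (Module.End k V)}
    (hI : IsRightIdeal I) : rangeIdeal (rangeSup I) = I := by
  refine le_antisymm (fun f hf => ?_) (fun f hf => range_le_rangeSup hf)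
  let b := Module.finBasis k V
  have hsum : f = ∑ i, (b.coord i).smulRight (f (b i)) :=
    b.ext fun j => by simp [Finsupp.single_apply]
  rw [hsum]
  exact I.sum_mem fun i _ => hI.smulRight_mem _ (hf ⟨b i, rfl⟩)

theorem rangeSup_le_comap {θ : Module.End k V} {I : AddSubgroup (Module.End k V)}
    (hI : IsRightIdeal I) (hθ : ∀ f ∈ I, θ * f - f * θ ∈ I) :
    rangeSup I ≤ (rangeSup I).comap θ :=
  iSup_le fun f => by
    have hθf : θ * f ∈ I := by simpa using I.add_mem (hθ f f.2) (hI f f.2 θ)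
    rw [← Submodule.map_le_iff_le_comap, ← range_comp]
    exact range_le_rangeSup hθf

end

/-- `V` has no `θ`-invariant subspace `W` with `0 ≠ W ≠ V` if and only if
`End_k(V)` has no right ideal `I` with `0 ≠ I ≠ End_k(V)` that is invariant
under the adjoint map `ad θ : f ↦ θ∘f − f∘θ`. -/
theorem no_proper_invariant_subspace_iff_no_proper_adInvariant_rightIdeal
    {k V : Type*} [Field k] [AddCommGroup V] [Module k V] [FiniteDimensional k V]
    (θ : Module.End k V) :
    (¬ ∃ W : Submodule k V, (∀ x ∈ W, θ x ∈ W) ∧ W ≠ ⊥ ∧ W ≠ ⊤) ↔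
    (¬ ∃ I : AddSubgroup (Module.End k V), IsRightIdeal I ∧
        (∀ f ∈ I, θ * f - f * θ ∈ I) ∧ I ≠ ⊥ ∧ I ≠ ⊤) := by
  constructor
  · rintro hV ⟨I, hI, hθI, hbot, htop⟩
    rw [← rangeIdeal_rangeSup hI, ne_eq, rangeIdeal_eq_bot_iff] at hbot
    rw [← rangeIdeal_rangeSup hI, ne_eq, rangeIdeal_eq_top_iff] at htop
    exact hV ⟨rangeSup I, fun x hx => rangeSup_le_comap hI hθI hx, hbot, htop⟩
  · rintro hI ⟨W, hW, hbot, htop⟩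
    exact hI ⟨rangeIdeal W, rangeIdeal_isRightIdeal W, rangeIdeal_adInvariant hW,
      mt rangeIdeal_eq_bot_iff.1 hbot, mt rangeIdeal_eq_top_iff.1 htop⟩
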